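/- arXiv:1505.05684 — 3 statements merged into one kernel-verified Lean document; each statement's English description precedes it below -/
import Mathlib

section
/- Let R ⊆ A^q be a submodule such that M = A^q/R is finitely generated as a module over A_d. Then there exist a positive integer γ, a generating set {g₁,…,g_γ} of M over A_d, and companion matrices A₁(σ₁),…,A_{n−d}(σ₁) ∈ A_d^{γ×γ} for multiplication by σ_{d+1},…,σₙ respectively, each of which is unimodular over A_d (i.e., invertible in A_d^{γ×γ}, its determinant being a unit of A_d). -/
set_option synthInstance.maxHeartbeats 1000000
set_option maxHeartbeats 1000000

noncomputable section

/-- The Laurent polynomial ring `A = ℝ[σ₁^{±1},…,σₙ^{±1}]` in `n` indeterminates,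
realized as the group algebra of `ℤⁿ` over `ℝ`. -/
abbrev LP (n : ℕ) : Type := AddMonoidAlgebra ℝ (Fin n → ℤ)

/-- The monomial `σ^ν` for `ν ∈ ℤⁿ`. -/
def mono {n : ℕ} (ν : Fin n → ℤ) : LP n := AddMonoidAlgebra.single ν 1

/-- The Laurent polynomial subring `A_d = ℝ[σ₁^{±1},…,σ_d^{±1}]` in the first `d`
indeterminates, as a subalgebra of `A`: it is generated by the monomials `σ^ν`
with `ν` supported on the first `d` coordinates. -/
def subA (n d : ℕ) : Subalgebra ℝ (LP n) :=
  Algebra.adjoin ℝ {x | ∃ ν : Fin n → ℤ, (∀ i : Fin n, d ≤ (i : ℕ) → ν i = 0) ∧ x = mono ν}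

/-- The index of the variable `σ_{d+j}` for `1 ≤ j ≤ n-d` (0-indexed: `j : Fin (n-d)`). -/
def embIdx {n : ℕ} (d : ℕ) (j : Fin (n - d)) : Fin n :=
  ⟨d + (j : ℕ), by have := j.isLt; omega⟩

/-- The variable `σ_{d+j}` as an element of `A`. -/
def sigmaVar {n : ℕ} (d : ℕ) (j : Fin (n - d)) : LP n := mono (Pi.single (embIdx d j) 1)

/-- The action of a Laurent polynomial `f ∈ A` on a scalar trajectory `w : ℤⁿ → ℝ`:
`(σ^{ν'} w)(ν) = w(ν + ν')`, extended `ℝ`-linearly. -/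
def actS {n : ℕ} (f : LP n) (w : (Fin n → ℤ) → ℝ) : (Fin n → ℤ) → ℝ :=
  fun ν => Finsupp.sum f.coeff fun μ c => c * w (ν + μ)

/-- The action of a row vector `r ∈ A^q` on a vector trajectory `w : ℤⁿ → ℝ^q`:
`r·w = Σᵢ rᵢ·wᵢ`. -/
def actRow {n q : ℕ} (r : Fin q → LP n) (w : (Fin n → ℤ) → Fin q → ℝ) : (Fin n → ℤ) → ℝ :=
  fun ν => ∑ j, actS (r j) (fun μ => w μ j) ν

/-- The componentwise action of a matrix `P ∈ A^{a×b}` on a trajectory `w : ℤⁿ → ℝ^b`. -/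
def actMat {n a b : ℕ} (P : Matrix (Fin a) (Fin b) (LP n)) (w : (Fin n → ℤ) → Fin b → ℝ) :
    (Fin n → ℤ) → Fin a → ℝ :=
  fun ν i => actRow (P i) w ν

/-- The behavior of a submodule `R ⊆ A^q`:
`B(R) = {w : ℤⁿ → ℝ^q | r·w = 0 for all r ∈ R}`. -/
def Behavior {n q : ℕ} (R : Submodule (LP n) (Fin q → LP n)) :
    Set ((Fin n → ℤ) → Fin q → ℝ) :=
  {w | ∀ r ∈ R, actRow r w = 0}

/-- A matrix `T ∈ ℤ^{n×n}` is ℤ-unimodular if `det T = ±1`. -/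
def Unimodular {n : ℕ} (T : Matrix (Fin n) (Fin n) ℤ) : Prop := T.det = 1 ∨ T.det = -1

/-- The `ℝ`-algebra endomorphism `φ_T : A → A` induced by `T ∈ ℤ^{n×n}`,
determined by `φ_T(σ^ν) = σ^{Tν}`. -/
def phiT {n : ℕ} (T : Matrix (Fin n) (Fin n) ℤ) : LP n →ₐ[ℝ] LP n :=
  AddMonoidAlgebra.mapDomainAlgHom ℝ ℝ T.mulVecLin.toAddMonoidHom

/-- The image `φ̂_T(R)` of a submodule `R ⊆ A^q` under the componentwise extension
`φ̂_T : A^q → A^q` of `φ_T` (the span is taken only to record that it is a submodule;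
for unimodular `T` the image is already a submodule). -/
def hatPhiT {n q : ℕ} (T : Matrix (Fin n) (Fin n) ℤ) (R : Submodule (LP n) (Fin q → LP n)) :
    Submodule (LP n) (Fin q → LP n) :=
  Submodule.span (LP n) ((fun r (i : Fin q) => phiT T (r i)) '' (R : Set (Fin q → LP n)))

/-- The annihilator ideal `ann(A^q/R) = {f ∈ A | f·v ∈ R for all v ∈ A^q}`. -/
def annQ {n q : ℕ} (R : Submodule (LP n) (Fin q → LP n)) : Ideal (LP n) :=
  Submodule.colon R ⊤

/-- The monomial `σ₁^{ν₁}⋯σ_d^{ν_d}` (the part of `σ^ν` in the first `d` variables),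
as an element of `A_d`. -/
def monoD (n d : ℕ) (ν : Fin n → ℤ) : subA n d :=
  ⟨mono (fun i => if (i : ℕ) < d then ν i else 0),
   Algebra.subset_adjoin
     ⟨fun i => if (i : ℕ) < d then ν i else 0, fun i hi => if_neg (by omega), rfl⟩⟩

/-!
Multiplication by `σ_{d+j}` is an automorphism of `M`, with inverse multiplication by
`σ_{d+j}⁻¹`. If `X` and `Y` are companion matrices of `σ_{d+j}` and `σ_{d+j}⁻¹` for a generating
family `h`, then `Y * X - 1` kills `h`, so after adjoining as many zero generators the block matrix
`[[X, 1], [Y X - 1, Y]]` is a companion matrix of `σ_{d+j}`, and it has the explicit inverse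
`[[Y, -1], [1 - X Y, X]]`.
-/

open Matrix

section Companion

variable {R M S ι κ : Type*} [CommRing R] [AddCommGroup M] [Module R M]
  [Monoid S] [DistribMulAction S M]

theorem span_range_sumElim_zero (g : ι → M) :
    Submodule.span R (Set.range (Sum.elim g (0 : ι → M))) = Submodule.span R (Set.range g) := by
  rw [Set.Sum.elim_range, Submodule.span_union, sup_eq_left]
  exact Submodule.span_le.2 (Set.range_subset_iff.2 fun _ => zero_mem _)

variable [Fintype ι] [Fintype κ]

def IsCompanion (s : S) (g : ι → M) (A : Matrix ι ι R) : Prop :=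
  ∀ i, s • g i = ∑ k, A i k • g k

theorem exists_isCompanion {g : ι → M} (hg : Submodule.span R (Set.range g) = ⊤) (s : S) :
    ∃ A : Matrix ι ι R, IsCompanion s g A := by
  have : ∀ i, ∃ c : ι → R, ∑ k, c k • g k = s • g i := fun i =>
    (Submodule.mem_span_range_iff_exists_fun R).1 (hg ▸ Submodule.mem_top)
  choose A hA using this
  exact ⟨Matrix.of A, fun i => (hA i).symm⟩

theorem IsCompanion.reindex {s : S} {g : ι → M} {A : Matrix ι ι R} (hA : IsCompanion s g A)
    (e : ι ≃ κ) : IsCompanion s (g ∘ e.symm) (Matrix.reindex e e A) := by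
  intro i
  rw [Function.comp_apply, hA]
  exact Fintype.sum_equiv e _ _ fun k => by simp

variable [SMulCommClass S R M]

theorem sum_mul_apply_smul (A B : Matrix ι ι R) (g : ι → M) (i : ι) :
    ∑ l, (A * B) i l • g l = ∑ k, A i k • ∑ l, B k l • g l := by
  simp only [Matrix.mul_apply, Finset.sum_smul, Finset.smul_sum, mul_smul]
  exact Finset.sum_comm

theorem IsCompanion.sum_mul_smul_eq {s t : S} (hst : s * t = 1) {g : ι → M}
    {X Y : Matrix ι ι R} (hX : IsCompanion s g X) (hY : IsCompanion t g Y) (i : ι) :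
    ∑ l, (Y * X) i l • g l = g i := by
  calc ∑ l, (Y * X) i l • g l
      = ∑ k, Y i k • (s • g k) := by
        rw [sum_mul_apply_smul]
        exact Finset.sum_congr rfl fun k _ => by rw [hX k]
    _ = s • (t • g i) := by simp only [hY i, Finset.smul_sum, smul_comm s]
    _ = g i := by rw [smul_smul, hst, one_smul]

variable [DecidableEq ι]

theorem fromBlocks_companion_mul_inverse (X Y : Matrix ι ι R) :
    fromBlocks X 1 (Y * X - 1) Y * fromBlocks Y (-1) (1 - X * Y) X = 1 := by
  rw [fromBlocks_multiply, ← fromBlocks_one]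
  congr 1 <;> noncomm_ring

theorem isUnit_fromBlocks_companion (X Y : Matrix ι ι R) :
    IsUnit (fromBlocks X 1 (Y * X - 1) Y) :=
  (isUnit_iff_isUnit_det _).2 (isUnit_det_of_right_inverse (fromBlocks_companion_mul_inverse X Y))

theorem IsCompanion.fromBlocks {s t : S} (hst : s * t = 1) {g : ι → M} {X Y : Matrix ι ι R}
    (hX : IsCompanion s g X) (hY : IsCompanion t g Y) :
    IsCompanion s (Sum.elim g 0) (fromBlocks X 1 (Y * X - 1) Y) := by
  rintro (i | i)
  · simp [Fintype.sum_sum_type, hX i]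
  · have hker : ∑ l, (Y * X - 1) i l • g l = 0 := by
      simp only [Matrix.sub_apply, sub_smul, Finset.sum_sub_distrib, hX.sum_mul_smul_eq hst hY,
        one_apply, ite_smul, one_smul, zero_smul, Finset.sum_ite_eq, Finset.mem_univ, if_true,
        sub_self]
    simp only [Fintype.sum_sum_type, Sum.elim_inl, Sum.elim_inr, fromBlocks_apply₂₁,
      fromBlocks_apply₂₂, Pi.zero_apply, smul_zero, Finset.sum_const_zero, add_zero, hker]

theorem exists_isUnit_isCompanion_sumElim_zero {g : ι → M}
    (hg : Submodule.span R (Set.range g) = ⊤) {s : S} (hs : IsUnit s) :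
    ∃ A : Matrix (ι ⊕ ι) (ι ⊕ ι) R, IsCompanion s (Sum.elim g 0) A ∧ IsUnit A := by
  obtain ⟨X, hX⟩ := exists_isCompanion hg s
  obtain ⟨Y, hY⟩ := exists_isCompanion hg (hs.unit⁻¹ : Sˣ)
  exact ⟨_, hX.fromBlocks hs.mul_val_inv hY, isUnit_fromBlocks_companion X Y⟩

end Companion

theorem mono_add {n : ℕ} (ν μ : Fin n → ℤ) : mono (ν + μ) = mono ν * mono μ := by
  simp [mono, AddMonoidAlgebra.single_mul_single]

theorem isUnit_sigmaVar {n : ℕ} (d : ℕ) (j : Fin (n - d)) : IsUnit (sigmaVar d j) :=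
  IsUnit.of_mul_eq_one (mono (-Pi.single (embIdx d j) 1)) <| by
    rw [sigmaVar, ← mono_add, add_neg_cancel]
    rfl

/-- Existence of a generating set with invertible companion matrices. -/
theorem stmt1 (n d q : ℕ) (R : Submodule (LP n) (Fin q → LP n))
    (hfg : Module.Finite (subA n d) ((Fin q → LP n) ⧸ R)) :
    ∃ γ : ℕ, 0 < γ ∧ ∃ g : Fin γ → (Fin q → LP n) ⧸ R,
      Submodule.span (subA n d) (Set.range g) = ⊤ ∧
      ∃ A : Fin (n - d) → Matrix (Fin γ) (Fin γ) (subA n d),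
        (∀ j : Fin (n - d), ∀ i : Fin γ, sigmaVar d j • g i = ∑ k, A j i k • g k) ∧
        ∀ j : Fin (n - d), IsUnit (A j) := by
  obtain ⟨m, g₀, hg₀⟩ := Module.Finite.exists_fin (R := subA n d) (M := (Fin q → LP n) ⧸ R)
  -- a zero generator is prepended so that `γ > 0` even when `M = 0`
  set h : Fin (m + 1) → (Fin q → LP n) ⧸ R := Fin.cons 0 g₀
  have hh : Submodule.span (subA n d) (Set.range h) = ⊤ := by
    rw [Fin.range_cons, Submodule.span_insert_zero, hg₀]
  choose A hA hAunit using fun j =>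
    exists_isUnit_isCompanion_sumElim_zero hh (isUnit_sigmaVar (n := n) d j)
  let e := finSumFinEquiv (m := m + 1) (n := m + 1)
  refine ⟨m + 1 + (m + 1), by omega, Sum.elim h 0 ∘ e.symm, ?_, fun j => reindex e e (A j),
    fun j => (hA j).reindex e, fun j => ?_⟩
  · rw [EquivLike.range_comp, span_range_sumElim_zero, hh]
  · rw [isUnit_iff_isUnit_det, det_reindex_self, ← isUnit_iff_isUnit_det]
    exact hAunit j
end
end

section
/- Let R ⊆ A^q be a submodule such that M = A^q/R is finitely generated as an A_d-module, let {g₁,…,g_γ} be a generating set with associated surjection ψ : A_d^γ → M, let A₁(σ₁),…,A_{n−d}(σ₁) ∈ A_d^{γ×γ} be companion matrices for multiplication by σ_{d+1},…,σₙ, each invertible over A_d, and let X(σ₁) ∈ A_d^{δ×γ} be a matrix of relations. Then for every (ν₁,…,ν_{n−d}) ∈ ℤ^{n−d} there exists a matrix E(σ₁) ∈ A_d^{δ×δ} such that X(σ₁)·Π_{j=1}^{n−d} A_j(σ₁)^{ν_j} = E(σ₁)·X(σ₁). -/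
set_option synthInstance.maxHeartbeats 1000000
set_option maxHeartbeats 1000000

noncomputable section

/-!
The kernel `K = ker ψ` is the row space of `X`. A companion matrix `A_j` intertwines `ψ` with
multiplication by `σ_{d+j}`, so `r ↦ r A_j` maps `K` into `K`; since `σ_{d+j}` is a unit of `A`,
the same holds for `A_j⁻¹`. Hence every product of integer powers of the `A_j` preserves `K`,
so each row of `X · Π A_j^{ν_j}` lies in the row space of `X`, which is the claim.
-/

open Matrix

namespace Matrix

variable {ι κ R : Type*} [CommSemiring R]

theorem exists_mul_eq_of_row_mem_span {m : Type*} [Fintype m] {X : Matrix m ι R}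
    {Y : Matrix κ ι R} (hY : ∀ k, Y k ∈ Submodule.span R (Set.range X)) :
    ∃ E : Matrix κ m R, Y = E * X := by
  choose E hE using fun k => (Submodule.mem_span_range_iff_exists_fun R).mp (hY k)
  refine ⟨of E, Matrix.ext fun k j => ?_⟩
  simp only [← hE k, mul_apply, of_apply, Finset.sum_apply, Pi.smul_apply, smul_eq_mul]

variable [Fintype ι] [DecidableEq ι]

def vecMulStabilizer (K : Submodule R (ι → R)) : Submonoid (Matrix ι ι R) where
  carrier := {P | ∀ r ∈ K, r ᵥ* P ∈ K}
  one_mem' r hr := by rwa [vecMul_one]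
  mul_mem' {P Q} hP hQ r hr := by
    rw [← vecMul_vecMul]
    exact hQ _ (hP r hr)

theorem mem_vecMulStabilizer {K : Submodule R (ι → R)} {P : Matrix ι ι R} :
    P ∈ vecMulStabilizer K ↔ ∀ r ∈ K, r ᵥ* P ∈ K :=
  Iff.rfl

end Matrix

section Companion

variable {ι R S M : Type*} [Fintype ι] [CommSemiring R] [AddCommMonoid M] [Module R M]
  [Monoid S] [DistribMulAction S M] [SMulCommClass S R M]
  {g : ι → M} {s : S} {A : Matrix ι ι R}

theorem Fintype.linearCombination_vecMul_of_companion (hA : ∀ i, s • g i = ∑ k, A i k • g k)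
    (r : ι → R) :
    Fintype.linearCombination R g (r ᵥ* A) = s • Fintype.linearCombination R g r := by
  simp only [Fintype.linearCombination_apply, vecMul, dotProduct, Finset.sum_smul, Finset.smul_sum,
    hA, smul_comm s, mul_smul]
  exact Finset.sum_comm

variable [DecidableEq ι]

theorem mem_vecMulStabilizer_of_companion (hA : ∀ i, s • g i = ∑ k, A i k • g k) :
    A ∈ vecMulStabilizer (LinearMap.ker (Fintype.linearCombination R g)) := by
  refine mem_vecMulStabilizer.mpr fun r hr => ?_
  rw [LinearMap.mem_ker] at hr ⊢
  rw [Fintype.linearCombination_vecMul_of_companion hA, hr, smul_zero]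

theorem inv_mem_vecMulStabilizer_of_companion {U : (Matrix ι ι R)ˣ} (hs : IsSMulRegular M s)
    (hU : ∀ i, s • g i = ∑ k, (U : Matrix ι ι R) i k • g k) :
    ((U⁻¹ : (Matrix ι ι R)ˣ) : Matrix ι ι R) ∈
      vecMulStabilizer (LinearMap.ker (Fintype.linearCombination R g)) := by
  refine mem_vecMulStabilizer.mpr fun r hr => ?_
  rw [LinearMap.mem_ker] at hr ⊢
  refine hs (show s • _ = s • 0 from ?_)
  rw [← Fintype.linearCombination_vecMul_of_companion hU, vecMul_vecMul, ← Units.val_mul,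
    inv_mul_cancel, Units.val_one, vecMul_one, hr, smul_zero]

theorem mem_units_vecMulStabilizer_of_companion {U : (Matrix ι ι R)ˣ} (hs : IsSMulRegular M s)
    (hU : ∀ i, s • g i = ∑ k, (U : Matrix ι ι R) i k • g k) :
    U ∈ (vecMulStabilizer (LinearMap.ker (Fintype.linearCombination R g))).units :=
  ⟨mem_vecMulStabilizer_of_companion hU, inv_mem_vecMulStabilizer_of_companion hs hU⟩

end Companion

theorem isUnit_mono {n : ℕ} (ν : Fin n → ℤ) : IsUnit (mono ν) :=
  (Group.isUnit (Multiplicative.ofAdd ν)).map (AddMonoidAlgebra.of ℝ _)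

theorem stmt2_general (n d q γ δ : ℕ) (R : Submodule (LP n) (Fin q → LP n))
    (g : Fin γ → (Fin q → LP n) ⧸ R)
    (A : Fin (n - d) → (Matrix (Fin γ) (Fin γ) (subA n d))ˣ)
    (hA : ∀ j : Fin (n - d), ∀ i : Fin γ,
      sigmaVar d j • g i = ∑ k, ((A j : Matrix (Fin γ) (Fin γ) (subA n d)) i k) • g k)
    (X : Matrix (Fin δ) (Fin γ) (subA n d))
    (hX : ∀ r : Fin γ → subA n d,
      (∑ i, r i • g i) = 0 ↔ r ∈ Submodule.span (subA n d) (Set.range fun i : Fin δ => X i)) :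
    ∀ ν : Fin (n - d) → ℤ, ∃ E : Matrix (Fin δ) (Fin δ) (subA n d),
      X * (((List.ofFn fun j => A j ^ ν j).prod : (Matrix (Fin γ) (Fin γ) (subA n d))ˣ) :
          Matrix (Fin γ) (Fin γ) (subA n d)) = E * X := by
  intro ν
  have hK : LinearMap.ker (Fintype.linearCombination (subA n d) g) =
      Submodule.span (subA n d) (Set.range X) :=
    Submodule.ext hX
  have hU : (List.ofFn fun j => A j ^ ν j).prod ∈
      (vecMulStabilizer (Submodule.span (subA n d) (Set.range X))).units := by
    rw [← hK]
    refine list_prod_mem fun V hV => ?_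
    obtain ⟨j, rfl⟩ := List.mem_ofFn.mp hV
    exact Subgroup.zpow_mem _
      (mem_units_vecMulStabilizer_of_companion ((isUnit_mono _).isSMulRegular _) (hA j)) _
  exact exists_mul_eq_of_row_mem_span fun l => hU.1 (X l) (Submodule.subset_span ⟨l, rfl⟩)

/-- Intertwining of the relation matrix with integer powers of the
companion matrices. -/
theorem stmt2 (n d q γ δ : ℕ) (R : Submodule (LP n) (Fin q → LP n))
    (hfg : Module.Finite (subA n d) ((Fin q → LP n) ⧸ R))
    (g : Fin γ → (Fin q → LP n) ⧸ R)
    (hgen : Submodule.span (subA n d) (Set.range g) = ⊤)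
    (A : Fin (n - d) → (Matrix (Fin γ) (Fin γ) (subA n d))ˣ)
    (hA : ∀ j : Fin (n - d), ∀ i : Fin γ,
      sigmaVar d j • g i = ∑ k, ((A j : Matrix (Fin γ) (Fin γ) (subA n d)) i k) • g k)
    (X : Matrix (Fin δ) (Fin γ) (subA n d))
    (hX : ∀ r : Fin γ → subA n d,
      (∑ i, r i • g i) = 0 ↔ r ∈ Submodule.span (subA n d) (Set.range fun i : Fin δ => X i)) :
    ∀ ν : Fin (n - d) → ℤ, ∃ E : Matrix (Fin δ) (Fin δ) (subA n d),
      X * (((List.ofFn fun j => A j ^ ν j).prod : (Matrix (Fin γ) (Fin γ) (subA n d))ˣ) :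
          Matrix (Fin γ) (Fin γ) (subA n d)) = E * X :=
  stmt2_general n d q γ δ R g A hA X hX
end
end

section
/- For every submodule R ⊆ A^q and every ℤ-unimodular matrix T ∈ ℤ^{n×n}, one has Φ_T(B(R)) = B(φ̂_{T^{-1}}(R)). -/
set_option synthInstance.maxHeartbeats 1000000
set_option maxHeartbeats 1000000

noncomputable section

/-! The pull-back `Φ_T` intertwines the actions: `φ̂_S(r) · Φ_T w = Φ_T (r · w)` whenever `T S = 1`,
because `T (ν + S μ) = T ν + μ`. Hence `Φ_T w ∈ B(φ̂_S R)` iff `r · w` vanishes on the image of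
`T`, i.e. everywhere, for all `r ∈ R`; and for unimodular `T` the pull-back `Φ_{T⁻¹}` inverts `Φ_T`. -/

/-- The pull-back `(Φ_T w)(ν) = w(Tν)` of a trajectory. -/
def pullback {n : ℕ} {X : Type*} (T : Matrix (Fin n) (Fin n) ℤ) (w : (Fin n → ℤ) → X) :
    (Fin n → ℤ) → X :=
  fun ν => w (T.mulVec ν)

section Action

variable {n q : ℕ}

@[simp]
lemma actS_zero_left (w : (Fin n → ℤ) → ℝ) : actS (0 : LP n) w = 0 := by
  funext ν; simp [actS]

@[simp]
lemma actS_zero_right (f : LP n) : actS f (0 : (Fin n → ℤ) → ℝ) = 0 := by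
  funext ν; simp [actS]

lemma actS_add_left (f g : LP n) (w : (Fin n → ℤ) → ℝ) :
    actS (f + g) w = actS f w + actS g w := by
  funext ν
  simp only [actS, Pi.add_apply, AddMonoidAlgebra.coeff_add]
  rw [Finsupp.sum_add_index'] <;> simp [add_mul]

lemma actS_add_right (f : LP n) (u v : (Fin n → ℤ) → ℝ) :
    actS f (u + v) = actS f u + actS f v := by
  funext ν
  simp [actS, mul_add, Finsupp.sum_add]

lemma actS_single (a : Fin n → ℤ) (b : ℝ) (w : (Fin n → ℤ) → ℝ) :
    actS (AddMonoidAlgebra.single a b) w = fun ν => b * w (ν + a) := by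
  funext ν
  simp [actS]

lemma actS_mul (f g : LP n) (w : (Fin n → ℤ) → ℝ) :
    actS (f * g) w = actS f (actS g w) := by
  induction f using AddMonoidAlgebra.induction_linear with
  | zero => simp
  | add f f' hf hf' => rw [add_mul, actS_add_left, actS_add_left, hf, hf']
  | single a b =>
    induction g using AddMonoidAlgebra.induction_linear with
    | zero => simp
    | add g g' hg hg' => rw [mul_add, actS_add_left, actS_add_left, actS_add_right, hg, hg']
    | single a' b' =>
      simp only [AddMonoidAlgebra.single_mul_single, actS_single, add_assoc, mul_assoc]

lemma actS_sum (f : LP n) {ι : Type*} (s : Finset ι) (u : ι → (Fin n → ℤ) → ℝ) :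
    actS f (∑ j ∈ s, u j) = ∑ j ∈ s, actS f (u j) := by
  funext ν
  simp only [actS, Finset.sum_apply, Finsupp.sum, Finset.mul_sum]
  exact Finset.sum_comm

@[simp]
lemma actRow_zero (w : (Fin n → ℤ) → Fin q → ℝ) : actRow (0 : Fin q → LP n) w = 0 := by
  funext ν; simp [actRow]

lemma actRow_add (r r' : Fin q → LP n) (w : (Fin n → ℤ) → Fin q → ℝ) :
    actRow (r + r') w = actRow r w + actRow r' w := by
  funext ν
  simp [actRow, actS_add_left, Finset.sum_add_distrib]

lemma actRow_smul (c : LP n) (r : Fin q → LP n) (w : (Fin n → ℤ) → Fin q → ℝ) :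
    actRow (c • r) w = actS c (actRow r w) := by
  have hsum : actRow r w = ∑ j, actS (r j) (fun μ => w μ j) := by
    funext ν; simp [actRow]
  rw [hsum, actS_sum]
  funext ν
  simp [actRow, actS_mul]

lemma mem_behavior_span_iff (S : Set (Fin q → LP n)) (w : (Fin n → ℤ) → Fin q → ℝ) :
    w ∈ Behavior (Submodule.span (LP n) S) ↔ ∀ r ∈ S, actRow r w = 0 := by
  refine ⟨fun hw r hr => hw r (Submodule.subset_span hr), fun h r hr => ?_⟩
  induction hr using Submodule.span_induction with
  | mem x hx => exact h x hx
  | zero => exact actRow_zero w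
  | add x y _ _ hx hy => rw [actRow_add, hx, hy, add_zero]
  | smul c x _ hx => rw [actRow_smul, hx, actS_zero_right]

end Action

section Pullback

variable {n q : ℕ} {T S : Matrix (Fin n) (Fin n) ℤ}

lemma pullback_pullback {X : Type*} (hST : S * T = 1) (w : (Fin n → ℤ) → X) :
    pullback T (pullback S w) = w := by
  funext ν
  simp [pullback, Matrix.mulVec_mulVec, hST]

lemma actS_phiT_pullback (hTS : T * S = 1) (f : LP n) (w : (Fin n → ℤ) → ℝ) :
    actS (phiT S f) (pullback T w) = pullback T (actS f w) := by
  funext ν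
  change Finsupp.sum (Finsupp.mapDomain S.mulVec f.coeff) _ = _
  rw [Finsupp.sum_mapDomain_index (by simp) (by intros; rw [add_mul])]
  simp [actS, pullback, Matrix.mulVec_add, Matrix.mulVec_mulVec, hTS]

lemma actRow_phiT_pullback (hTS : T * S = 1) (r : Fin q → LP n)
    (w : (Fin n → ℤ) → Fin q → ℝ) :
    actRow (fun i => phiT S (r i)) (pullback T w) = pullback T (actRow r w) := by
  funext ν
  simp only [actRow]
  exact Finset.sum_congr rfl fun j _ => congrFun (actS_phiT_pullback hTS (r j) (fun μ => w μ j)) ν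

lemma pullback_eq_zero_iff (hTS : T * S = 1) (f : (Fin n → ℤ) → ℝ) :
    pullback T f = 0 ↔ f = 0 := by
  refine ⟨fun h => ?_, fun h => by subst h; rfl⟩
  rw [← pullback_pullback hTS f, h]
  rfl

lemma pullback_mem_behavior_iff (hTS : T * S = 1) (R : Submodule (LP n) (Fin q → LP n))
    (w : (Fin n → ℤ) → Fin q → ℝ) :
    pullback T w ∈ Behavior (hatPhiT S R) ↔ w ∈ Behavior R := by
  simp only [hatPhiT, mem_behavior_span_iff, Set.forall_mem_image, actRow_phiT_pullback hTS,
    pullback_eq_zero_iff hTS]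
  rfl

end Pullback

lemma Unimodular.isUnit_det {n : ℕ} {T : Matrix (Fin n) (Fin n) ℤ} (hT : Unimodular T) :
    IsUnit T.det := by
  rcases hT with h | h <;> simp [h]

/-- Pull-back of a behavior: `Φ_T(B(R)) = B(φ̂_{T⁻¹}(R))`. -/
theorem stmt13 (n q : ℕ) (T : Matrix (Fin n) (Fin n) ℤ) (hT : Unimodular T)
    (R : Submodule (LP n) (Fin q → LP n)) :
    (fun (w : (Fin n → ℤ) → Fin q → ℝ) (ν : Fin n → ℤ) => w (T.mulVec ν)) '' Behavior R =
      Behavior (hatPhiT T⁻¹ R) := by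
  have hTS : T * T⁻¹ = 1 := Matrix.mul_nonsing_inv T hT.isUnit_det
  have hST : T⁻¹ * T = 1 := Matrix.nonsing_inv_mul T hT.isUnit_det
  change pullback T '' Behavior R = _
  ext v
  constructor
  · rintro ⟨w, hw, rfl⟩
    exact (pullback_mem_behavior_iff hTS R w).mpr hw
  · intro hv
    refine ⟨pullback T⁻¹ v, ?_, pullback_pullback hST v⟩
    rw [← pullback_mem_behavior_iff hTS, pullback_pullback hST]
    exact hv
end
end
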